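/- arXiv:1609.03473 — 8 statements merged into one kernel-verified Lean document; each statement's English description precedes it below -/
import Mathlib

section
/- Let A be a unital JB-algebra and [A] = A/span(e) the quotient by the span of the unit. Then the quotient norm of twice the JB-norm on [A] equals the variation seminorm: for all a ∈ A, 2·inf_{μ∈ℝ} ‖a - μe‖ = max σ(a) - min σ(a). -/
/-!
For selfadjoint `a`, the isometric functional calculus gives `‖a - μ1‖ = max_{x ∈ σ(a)} |x - μ|`,
which equals `max (max σ(a) - μ) (μ - min σ(a))`. The infimum of this over `μ` is half the
spread of the spectrum, attained at its midpoint.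
-/

noncomputable section

variable {A : Type*} [CStarAlgebra A] [PartialOrder A] [StarOrderedRing A]

/-- `M(a/b) = inf {l > 0 : a ≤ l b}`. -/
def Mrel (a b : A) : ℝ := sInf {l : ℝ | 0 < l ∧ a ≤ l • b}

/-- Thompson's metric. -/
def dT (a b : A) : ℝ := Real.log (max (Mrel a b) (Mrel b a))

/-- Hilbert's metric. -/
def dH (a b : A) : ℝ := Real.log (Mrel a b * Mrel b a)

/-- The variation seminorm `max σ(a) - min σ(a)`. -/
def vnorm (a : A) : ℝ := sSup (spectrum ℝ a) - sInf (spectrum ℝ a)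

lemma IsCompact.isGreatest_abs_sub_image {S : Set ℝ} (hS : IsCompact S) (hne : S.Nonempty)
    (μ : ℝ) : IsGreatest ((fun x => |x - μ|) '' S) (max (sSup S - μ) (μ - sInf S)) := by
  have hm : sInf S ∈ S := hS.sInf_mem hne
  have hM : sSup S ∈ S := hS.sSup_mem hne
  have hmM : sInf S ≤ sSup S := csInf_le_csSup hne hS.bddBelow hS.bddAbove
  refine ⟨?_, ?_⟩
  · rcases max_cases (sSup S - μ) (μ - sInf S) with ⟨hmax, hle⟩ | ⟨hmax, hlt⟩
    · exact ⟨sSup S, hM, by rw [hmax]; exact abs_of_nonneg (by linarith)⟩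
    · exact ⟨sInf S, hm, by
        rw [hmax]; exact (abs_sub_comm _ μ).trans (abs_of_nonneg (by linarith))⟩
  · rintro _ ⟨x, hx, rfl⟩
    have hxM : x ≤ sSup S := le_csSup hS.bddAbove hx
    have hmx : sInf S ≤ x := csInf_le hS.bddBelow hx
    exact abs_sub_le_iff.mpr ⟨le_max_of_le_left (by linarith), le_max_of_le_right (by linarith)⟩

lemma IsSelfAdjoint.norm_sub_smul_one {A : Type*} [NormedRing A] [StarRing A] [NormedAlgebra ℝ A]
    [IsometricContinuousFunctionalCalculus ℝ A IsSelfAdjoint] [Nontrivial A] {a : A}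
    (ha : IsSelfAdjoint a) (μ : ℝ) :
    ‖a - μ • (1 : A)‖ = max (sSup (spectrum ℝ a) - μ) (μ - sInf (spectrum ℝ a)) := by
  have hcfc : cfc (fun x : ℝ => x - μ) a = a - μ • (1 : A) := by
    rw [cfc_sub (fun x : ℝ => x) (fun _ => μ) a, cfc_id' ℝ a, cfc_const μ a,
      Algebra.algebraMap_eq_smul_one]
  have hgreatest := IsGreatest.norm_cfc (fun x : ℝ => x - μ) a
  rw [hcfc] at hgreatest
  exact hgreatest.unique <|
    (ContinuousFunctionalCalculus.isCompact_spectrum a).isGreatest_abs_sub_image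
      (ContinuousFunctionalCalculus.spectrum_nonempty a ha) μ

lemma isLeast_max_sub_sub (M m : ℝ) :
    IsLeast {r : ℝ | ∃ μ : ℝ, r = max (M - μ) (μ - m)} ((M - m) / 2) := by
  refine ⟨⟨(M + m) / 2, by rw [max_eq_left (by linarith)]; ring⟩, ?_⟩
  rintro _ ⟨μ, rfl⟩
  have := le_max_left (M - μ) (μ - m)
  have := le_max_right (M - μ) (μ - m)
  linarith

/-- Twice the quotient norm on `A / span(1)` equals the variation seminorm. -/
theorem stmt3 [Nontrivial A] (a : A) (ha : IsSelfAdjoint a) :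
    2 * sInf {r : ℝ | ∃ μ : ℝ, r = ‖a - μ • (1 : A)‖} =
      sSup (spectrum ℝ a) - sInf (spectrum ℝ a) := by
  simp_rw [ha.norm_sub_smul_one, (isLeast_max_sub_sub _ _).csInf_eq]
  ring
end
end

section
/- Let A be a unital JB-algebra (e.g., the selfadjoint part of a unital C*-algebra). For a, b in the interior A₊° of the positive cone, Hilbert's metric satisfies d_H(a,b) = ‖log(U_{b^{-1/2}} a)‖_v and Thompson's metric satisfies d_T(a,b) = ‖log(U_{b^{-1/2}} a)‖, where ‖c‖_v := max σ(c) - min σ(c). -/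
/-!
Conjugation by the selfadjoint unit `s = b ^ (-1/2)` is an order automorphism sending `b` to `1`
and `a` to `c = s * a * s`, so `M(a/b) = M(c/1)` and `M(b/a) = M(1/c)`. For strictly positive `c`,
`c ≤ l • 1` iff `σ(c) ≤ l`, and `1 ≤ l • c` iff `l⁻¹ ≤ min σ(c)`; hence `M(c/1) = max σ(c)` and
`M(1/c) = (min σ(c))⁻¹`. As `log` is increasing, `σ(log c)` has extremes `log (max σ(c))` and
`log (min σ(c))`, and the norm of a selfadjoint element is `max (max σ) (-min σ)`.
-/

noncomputable section

variable {A : Type*} [CStarAlgebra A] [PartialOrder A] [StarOrderedRing A]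

theorem IsSelfAdjoint.conjugate_le_conjugate_iff {R : Type*} [Semiring R] [StarRing R]
    [PartialOrder R] [StarOrderedRing R] {s a b : R} (hs : IsSelfAdjoint s) (hu : IsUnit s) :
    s * a * s ≤ s * b * s ↔ a ≤ b := by
  refine ⟨fun h => ?_, fun h => hs.conjugate_le_conjugate h⟩
  obtain ⟨u, rfl⟩ := hu
  have hinv : IsSelfAdjoint (↑u⁻¹ : R) := by
    have hstar : star u = u := Units.ext (by rw [Units.coe_star, hs.star_eq])
    rw [IsSelfAdjoint, ← Units.coe_star_inv, hstar]
  simpa [mul_assoc] using hinv.conjugate_le_conjugate h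

theorem Mrel_of_subsingleton {B : Type*} [CStarAlgebra B] [PartialOrder B] [Subsingleton B]
    (a b : B) : Mrel a b = 0 := by
  have hle : ∀ l : ℝ, a ≤ l • b := fun _ => (Subsingleton.elim _ _).le
  simp only [Mrel, hle, and_true]
  exact csInf_Ioi

theorem Mrel_conjugate {s : A} (hs : IsSelfAdjoint s) (hu : IsUnit s) (a b : A) :
    Mrel (s * a * s) (s * b * s) = Mrel a b := by
  have hle : ∀ l : ℝ, s * a * s ≤ l • (s * b * s) ↔ a ≤ l • b := fun l => by
    rw [← hs.conjugate_le_conjugate_iff hu (b := l • b), mul_smul_comm, smul_mul_assoc]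
  simp only [Mrel, hle]

theorem dH_conjugate {s : A} (hs : IsSelfAdjoint s) (hu : IsUnit s) (a b : A) :
    dH (s * a * s) (s * b * s) = dH a b := by
  simp only [dH, Mrel_conjugate hs hu]

theorem dT_conjugate {s : A} (hs : IsSelfAdjoint s) (hu : IsUnit s) (a b : A) :
    dT (s * a * s) (s * b * s) = dT a b := by
  simp only [dT, Mrel_conjugate hs hu]

section Spectrum

variable {B : Type*} [Ring B] [StarRing B] [TopologicalSpace B] [Algebra ℝ B]
  [ContinuousFunctionalCalculus ℝ B IsSelfAdjoint] [Nontrivial B] {e : B}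

theorem IsSelfAdjoint.isGreatest_spectrum (he : IsSelfAdjoint e) :
    IsGreatest (spectrum ℝ e) (sSup (spectrum ℝ e)) :=
  (ContinuousFunctionalCalculus.isCompact_spectrum e).isGreatest_sSup
    (ContinuousFunctionalCalculus.spectrum_nonempty e he)

theorem IsSelfAdjoint.isLeast_spectrum (he : IsSelfAdjoint e) :
    IsLeast (spectrum ℝ e) (sInf (spectrum ℝ e)) :=
  (ContinuousFunctionalCalculus.isCompact_spectrum e).isLeast_sInf
    (ContinuousFunctionalCalculus.spectrum_nonempty e he)

theorem IsSelfAdjoint.isGreatest_spectrum_cfc (he : IsSelfAdjoint e) {f : ℝ → ℝ}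
    (hf : MonotoneOn f (spectrum ℝ e)) (hfc : ContinuousOn f (spectrum ℝ e)) :
    IsGreatest (spectrum ℝ (cfc f e)) (f (sSup (spectrum ℝ e))) := by
  rw [cfc_map_spectrum f e he hfc]
  exact hf.map_isGreatest he.isGreatest_spectrum

theorem IsSelfAdjoint.isLeast_spectrum_cfc (he : IsSelfAdjoint e) {f : ℝ → ℝ}
    (hf : MonotoneOn f (spectrum ℝ e)) (hfc : ContinuousOn f (spectrum ℝ e)) :
    IsLeast (spectrum ℝ (cfc f e)) (f (sInf (spectrum ℝ e))) := by
  rw [cfc_map_spectrum f e he hfc]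
  exact hf.map_isLeast he.isLeast_spectrum

end Spectrum

theorem IsSelfAdjoint.norm_eq_max_sSup_spectrum {B : Type*} [CStarAlgebra B] [Nontrivial B] {e : B}
    (he : IsSelfAdjoint e) :
    ‖e‖ = max (sSup (spectrum ℝ e)) (-sInf (spectrum ℝ e)) := by
  have hS := he.isGreatest_spectrum
  have hI := he.isLeast_spectrum
  have hbound : ∀ x ∈ spectrum ℝ e, |x| ≤ ‖e‖ := fun x hx => spectrum.norm_le_norm_of_mem hx
  refine le_antisymm ?_
    (max_le (abs_le.mp (hbound _ hS.1)).2 (neg_le.mp (abs_le.mp (hbound _ hI.1)).1))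
  rcases CStarAlgebra.norm_or_neg_norm_mem_spectrum he with h | h
  · exact le_max_of_le_left (hS.2 h)
  · exact le_max_of_le_right (le_neg.mpr (hI.2 h))

section Nontrivial

variable [Nontrivial A] {c : A}

theorem Mrel_one_right_eq_sSup_spectrum (hc : IsStrictlyPositive c) :
    Mrel c 1 = sSup (spectrum ℝ c) := by
  have hS := hc.isSelfAdjoint.isGreatest_spectrum
  have hle : ∀ l : ℝ, c ≤ l • 1 ↔ sSup (spectrum ℝ c) ≤ l := fun l => by
    rw [← Algebra.algebraMap_eq_smul_one, le_algebraMap_iff_spectrum_le hc.isSelfAdjoint]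
    exact ⟨fun h => h _ hS.1, fun h x hx => (hS.2 hx).trans h⟩
  exact IsLeast.csInf_eq ⟨⟨hc.spectrum_pos hS.1, (hle _).2 le_rfl⟩, fun l hl => (hle l).1 hl.2⟩

theorem Mrel_one_left_eq_inv_sInf_spectrum (hc : IsStrictlyPositive c) :
    Mrel 1 c = (sInf (spectrum ℝ c))⁻¹ := by
  have hI := hc.isSelfAdjoint.isLeast_spectrum
  have hI0 : 0 < (sInf (spectrum ℝ c))⁻¹ := inv_pos.2 (hc.spectrum_pos hI.1)
  have hle : ∀ l : ℝ, 0 < l → (1 ≤ l • c ↔ (sInf (spectrum ℝ c))⁻¹ ≤ l) := fun l hl => by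
    rw [← inv_smul_le_iff_of_pos hl, ← Algebra.algebraMap_eq_smul_one,
      algebraMap_le_iff_le_spectrum hc.isSelfAdjoint, inv_le_comm₀ (hc.spectrum_pos hI.1) hl]
    exact ⟨fun h => h _ hI.1, fun h x hx => h.trans (hI.2 hx)⟩
  exact IsLeast.csInf_eq ⟨⟨hI0, (hle _ hI0).2 le_rfl⟩, fun l hl => (hle l hl.1).1 hl.2⟩

theorem IsStrictlyPositive.sSup_spectrum_cfc_log (hc : IsStrictlyPositive c) :
    sSup (spectrum ℝ (cfc Real.log c)) = Real.log (sSup (spectrum ℝ c)) :=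
  (hc.isSelfAdjoint.isGreatest_spectrum_cfc
    (Real.strictMonoOn_log.monotoneOn.mono fun _ hx => hc.spectrum_pos hx)
    (Real.continuousOn_log.mono fun _ hx => (hc.spectrum_pos hx).ne')).csSup_eq

theorem IsStrictlyPositive.sInf_spectrum_cfc_log (hc : IsStrictlyPositive c) :
    sInf (spectrum ℝ (cfc Real.log c)) = Real.log (sInf (spectrum ℝ c)) :=
  (hc.isSelfAdjoint.isLeast_spectrum_cfc
    (Real.strictMonoOn_log.monotoneOn.mono fun _ hx => hc.spectrum_pos hx)
    (Real.continuousOn_log.mono fun _ hx => (hc.spectrum_pos hx).ne')).csInf_eq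

theorem dH_one_right_eq_vnorm_log (hc : IsStrictlyPositive c) :
    dH c 1 = vnorm (cfc Real.log c) := by
  have hS := hc.spectrum_pos hc.isSelfAdjoint.isGreatest_spectrum.1
  have hI := hc.spectrum_pos hc.isSelfAdjoint.isLeast_spectrum.1
  rw [dH, vnorm, Mrel_one_right_eq_sSup_spectrum hc, Mrel_one_left_eq_inv_sInf_spectrum hc,
    hc.sSup_spectrum_cfc_log, hc.sInf_spectrum_cfc_log,
    Real.log_mul hS.ne' (inv_ne_zero hI.ne'), Real.log_inv, sub_eq_add_neg]

theorem dT_one_right_eq_norm_log (hc : IsStrictlyPositive c) : dT c 1 = ‖cfc Real.log c‖ := by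
  have hS := hc.spectrum_pos hc.isSelfAdjoint.isGreatest_spectrum.1
  have hI := hc.spectrum_pos hc.isSelfAdjoint.isLeast_spectrum.1
  rw [dT, Mrel_one_right_eq_sSup_spectrum hc, Mrel_one_left_eq_inv_sInf_spectrum hc,
    (cfc_predicate Real.log c).norm_eq_max_sSup_spectrum, hc.sSup_spectrum_cfc_log,
    hc.sInf_spectrum_cfc_log, ← Real.log_inv,
    Real.strictMonoOn_log.monotoneOn.map_max hS (inv_pos.2 hI)]

end Nontrivial

/-- Formulas for Hilbert's and Thompson's metrics on the interior of the cone: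
`d_H(a,b) = ‖log (U_{b^{-1/2}} a)‖_v` and `d_T(a,b) = ‖log (U_{b^{-1/2}} a)‖`. -/
theorem stmt4 (a b : A) (ha0 : 0 ≤ a) (hau : IsUnit a) (hb0 : 0 ≤ b) (hbu : IsUnit b) :
    dH a b =
      vnorm (cfc Real.log
        (cfc (fun x : ℝ => x ^ (-(1 : ℝ) / 2)) b * a * cfc (fun x : ℝ => x ^ (-(1 : ℝ) / 2)) b)) ∧
    dT a b =
      ‖cfc Real.log
        (cfc (fun x : ℝ => x ^ (-(1 : ℝ) / 2)) b * a * cfc (fun x : ℝ => x ^ (-(1 : ℝ) / 2)) b)‖ := by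
  rcases subsingleton_or_nontrivial A with hA | hA
  · simp [dH, dT, vnorm, Mrel_of_subsingleton, spectrum.of_subsingleton,
      Subsingleton.elim _ (0 : A)]
  have hb : IsStrictlyPositive b := hbu.isStrictlyPositive hb0
  have hs : cfc (fun x : ℝ => x ^ (-(1 : ℝ) / 2)) b = b ^ (-(1 / 2) : ℝ) := by
    rw [CFC.rpow_eq_cfc_real, neg_div]
  have hs' : IsStrictlyPositive (b ^ (-(1 / 2) : ℝ)) := .rpow b _ hb
  have hsa := hs'.isSelfAdjoint
  have hsu := hs'.isUnit
  have hc : IsStrictlyPositive (b ^ (-(1 / 2) : ℝ) * a * b ^ (-(1 / 2) : ℝ)) :=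
    IsStrictlyPositive.conjugate_of_isUnit_of_isSelfAdjoint a _ hsu hsa (hau.isStrictlyPositive ha0)
  rw [hs, ← dH_one_right_eq_vnorm_log hc, ← dT_one_right_eq_norm_log hc,
    ← CFC.conjugate_rpow_neg_one_half b, dH_conjugate hsa hsu, dT_conjugate hsa hsu]
  exact ⟨rfl, rfl⟩
end
end

section
/- Let A be a unital JB-algebra and a, b invertible positive elements in A₊°. Then M(b⁻¹/a⁻¹) = M(a/b); consequently the inversion map a ↦ a⁻¹ is an isometry of A₊° for both Thompson's metric and Hilbert's metric. -/
noncomputable section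

variable {A : Type*} [CStarAlgebra A] [PartialOrder A] [StarOrderedRing A]

lemma key_iff (a b : A) (ha0 : 0 ≤ a) (hau : IsUnit a) (hb0 : 0 ≤ b) (hbu : IsUnit b)
    {l : ℝ} (hl : 0 < l) :
    a ≤ l • b ↔ Ring.inverse b ≤ l • Ring.inverse a := by
  lift a to Aˣ using hau
  lift b to Aˣ using hbu
  have hlne : l ≠ 0 := hl.ne'
  set w : Aˣ := ⟨l • (b : A), l⁻¹ • ((b⁻¹ : Aˣ) : A),
    by rw [smul_mul_smul_comm, mul_inv_cancel₀ hlne, Units.mul_inv, one_smul],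
    by rw [smul_mul_smul_comm, inv_mul_cancel₀ hlne, Units.inv_mul, one_smul]⟩ with hw
  have hw0 : (0 : A) ≤ (w : A) := smul_nonneg hl.le hb0
  have h1 : a ≤ l • (b : A) ↔ ((w⁻¹ : Aˣ) : A) ≤ ((a⁻¹ : Aˣ) : A) :=
    (CStarAlgebra.inv_le_inv_iff hw0 ha0).symm
  rw [Ring.inverse_unit, Ring.inverse_unit]
  rw [h1]
  show l⁻¹ • ((b⁻¹ : Aˣ) : A) ≤ _ ↔ _
  constructor
  · intro h
    have := smul_le_smul_of_nonneg_left h hl.le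
    rwa [smul_smul, mul_inv_cancel₀ hlne, one_smul] at this
  · intro h
    have := smul_le_smul_of_nonneg_left h (inv_nonneg.mpr hl.le)
    rwa [smul_smul, inv_mul_cancel₀ hlne, one_smul] at this

lemma key (a b : A) (ha0 : 0 ≤ a) (hau : IsUnit a) (hb0 : 0 ≤ b) (hbu : IsUnit b) :
    Mrel (Ring.inverse b) (Ring.inverse a) = Mrel a b := by
  unfold Mrel
  congr 1
  ext l
  exact and_congr_right fun hl => (key_iff a b ha0 hau hb0 hbu hl).symm

/-- `M(b⁻¹/a⁻¹) = M(a/b)`, and consequently inversion is an isometry for both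
Thompson's and Hilbert's metrics. -/
theorem stmt5 (a b : A) (ha0 : 0 ≤ a) (hau : IsUnit a) (hb0 : 0 ≤ b) (hbu : IsUnit b) :
    Mrel (Ring.inverse b) (Ring.inverse a) = Mrel a b ∧
    dT (Ring.inverse a) (Ring.inverse b) = dT a b ∧
    dH (Ring.inverse a) (Ring.inverse b) = dH a b := by
  have h1 := key a b ha0 hau hb0 hbu
  have h2 := key b a hb0 hbu ha0 hau
  refine ⟨h1, ?_, ?_⟩
  · unfold dT
    rw [h1, h2, max_comm]
  · unfold dH
    rw [h1, h2, mul_comm]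
end
end

section
/- Let A be a unital JB-algebra and a, b ∈ A₊° positive invertible. Then c := U_{a^{1/2}}((U_{a^{-1/2}} b)^{1/2}) is the unique positive invertible solution of the equation U_c(a⁻¹) = b. Moreover this geometric mean is symmetric: a # b = b # a. -/
noncomputable section

variable {A : Type*} [CStarAlgebra A] [PartialOrder A] [StarOrderedRing A]

/-- The geometric mean `a # b = U_{a^{1/2}} ((U_{a^{-1/2}} b)^{1/2})`. -/
def geomMean (a b : A) : A :=
  cfc Real.sqrt a *
    cfc Real.sqrt
      (cfc (fun x : ℝ => (Real.sqrt x)⁻¹) a * b * cfc (fun x : ℝ => (Real.sqrt x)⁻¹) a) *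
    cfc Real.sqrt a

/-- Uniqueness of nonneg square roots. -/
private lemma sq_inj' {b c : A} (hb : 0 ≤ b) (hc : 0 ≤ c) (h : b * b = c * c) : b = c := by
  have h1 : CFC.sqrt (b * b) = b := CFC.sqrt_mul_self b hb
  have h2 : CFC.sqrt (c * c) = c := CFC.sqrt_mul_self c hc
  rw [← h1, ← h2, h]

private lemma geomMean_main (a b : A) (ha0 : 0 ≤ a) (hau : IsUnit a) (hb0 : 0 ≤ b)
    (hbu : IsUnit b) :
    (0 ≤ geomMean a b ∧ IsUnit (geomMean a b) ∧
      geomMean a b * Ring.inverse a * geomMean a b = b) ∧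
    ∀ c : A, 0 ≤ c → IsUnit c → c * Ring.inverse a * c = b → c = geomMean a b := by
  have hsa : IsSelfAdjoint a := IsSelfAdjoint.of_nonneg ha0
  set s := cfc Real.sqrt a with hs_def
  set t := cfc (fun x : ℝ => (Real.sqrt x)⁻¹) a with ht_def
  have hspec : ∀ x ∈ spectrum ℝ a, 0 < x := by
    intro x hx
    rcases (spectrum_nonneg_of_nonneg ha0 hx).lt_or_eq with h | h
    · exact h
    · rw [← h] at hx; exact absurd hx (spectrum.zero_notMem ℝ hau)
  have hcont : ContinuousOn (fun x : ℝ => (Real.sqrt x)⁻¹) (spectrum ℝ a) :=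
    Real.continuous_sqrt.continuousOn.inv₀ fun x hx => (Real.sqrt_pos.mpr (hspec x hx)).ne'
  have hs0 : 0 ≤ s := cfc_nonneg fun x _ => Real.sqrt_nonneg x
  have ht0 : 0 ≤ t := cfc_nonneg fun x _ => by positivity
  have hst : s * t = 1 := by
    rw [hs_def, ht_def, ← cfc_mul _ _ a Real.continuous_sqrt.continuousOn hcont,
      cfc_congr (g := fun _ => (1 : ℝ))
        fun x hx => mul_inv_cancel₀ (Real.sqrt_pos.mpr (hspec x hx)).ne',
      cfc_const_one ℝ a]
  have hts : t * s = 1 := by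
    rw [hs_def, ht_def, ← cfc_mul _ _ a hcont Real.continuous_sqrt.continuousOn,
      cfc_congr (g := fun _ => (1 : ℝ))
        fun x hx => inv_mul_cancel₀ (Real.sqrt_pos.mpr (hspec x hx)).ne',
      cfc_const_one ℝ a]
  have hss : s * s = a := by
    rw [hs_def, ← cfc_mul _ _ a Real.continuous_sqrt.continuousOn Real.continuous_sqrt.continuousOn,
      cfc_congr (g := fun x : ℝ => x) fun x hx => Real.mul_self_sqrt (hspec x hx).le,
      cfc_id' ℝ a]
  have htsa : IsSelfAdjoint t := .of_nonneg ht0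
  have hssa : IsSelfAdjoint s := .of_nonneg hs0
  set d := t * b * t with hd_def
  have hd0 : 0 ≤ d := htsa.conjugate_nonneg hb0
  have hdsa : IsSelfAdjoint d := .of_nonneg hd0
  set m := cfc Real.sqrt d with hm_def
  have hm0 : 0 ≤ m := cfc_nonneg fun x _ => Real.sqrt_nonneg x
  have hmm : m * m = d := by
    rw [hm_def, ← cfc_mul _ _ d Real.continuous_sqrt.continuousOn Real.continuous_sqrt.continuousOn,
      cfc_congr (g := fun x : ℝ => x)
        fun x hx => Real.mul_self_sqrt (spectrum_nonneg_of_nonneg hd0 hx),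
      cfc_id' ℝ d]
  have hatt : a * (t * t) = 1 := by
    rw [← hss, mul_assoc, ← mul_assoc s t t, hst, one_mul, hst]
  have hinv : Ring.inverse a = t * t := by
    calc Ring.inverse a = Ring.inverse a * (a * (t * t)) := by rw [hatt, mul_one]
      _ = Ring.inverse a * a * (t * t) := by rw [mul_assoc]
      _ = t * t := by rw [Ring.inverse_mul_cancel a hau, one_mul]
  have hgm : geomMean a b = s * m * s := by
    unfold geomMean
    rw [hs_def, hm_def, hd_def, ht_def]
  have hc0 : 0 ≤ geomMean a b := by rw [hgm]; exact hssa.conjugate_nonneg hm0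
  have hdu : IsUnit d := by
    have htu : IsUnit t := ⟨⟨t, s, hts, hst⟩, rfl⟩
    rw [hd_def]; exact (htu.mul hbu).mul htu
  have hmu : IsUnit m := by
    obtain ⟨u, hu⟩ := hdu
    have h1 : m * (m * ↑u⁻¹) = 1 := by rw [← mul_assoc, hmm, ← hu, u.mul_inv]
    have h2 : (↑u⁻¹ * m) * m = 1 := by rw [mul_assoc, hmm, ← hu, u.inv_mul]
    have h3 : (↑u⁻¹ * m : A) = m * ↑u⁻¹ := left_inv_eq_right_inv h2 h1
    exact ⟨⟨m, m * ↑u⁻¹, h1, by rw [← h3]; exact h2⟩, rfl⟩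
  have hcu : IsUnit (geomMean a b) := by
    have hsu : IsUnit s := ⟨⟨s, t, hst, hts⟩, rfl⟩
    rw [hgm]; exact (hsu.mul hmu).mul hsu
  have hmain : geomMean a b * Ring.inverse a * geomMean a b = b := by
    rw [hgm, hinv]
    have h1 : s * m * s * (t * t) * (s * m * s)
        = s * m * (s * t) * ((t * s) * (m * s)) := by noncomm_ring
    rw [h1, hst, hts, mul_one, one_mul]
    have h2 : s * m * (m * s) = s * (m * m) * s := by noncomm_ring
    rw [h2, hmm, hd_def]
    have h3 : s * (t * b * t) * s = (s * t) * b * (t * s) := by noncomm_ring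
    rw [h3, hst, hts, one_mul, mul_one]
  refine ⟨⟨hc0, hcu, hmain⟩, ?_⟩
  intro c hc0' hcu' hceq
  rw [hinv] at hceq
  have he0 : 0 ≤ t * c * t := htsa.conjugate_nonneg hc0'
  have hee : (t * c * t) * (t * c * t) = m * m := by
    rw [hmm, hd_def]
    have h4 : (t * c * t) * (t * c * t) = t * (c * (t * t) * c) * t := by noncomm_ring
    rw [h4, hceq]
  have he : t * c * t = m := sq_inj' he0 hm0 hee
  have hrec : s * (t * c * t) * s = c := by
    have h5 : s * (t * c * t) * s = (s * t) * c * (t * s) := by noncomm_ring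
    rw [h5, hst, hts, one_mul, mul_one]
  rw [hgm, ← he, hrec]

private lemma swap_sol {c x y : A} (hc : IsUnit c) (hx : IsUnit x) (hy : IsUnit y)
    (h : c * Ring.inverse x * c = y) : c * Ring.inverse y * c = x := by
  obtain ⟨C, rfl⟩ := hc
  obtain ⟨X, rfl⟩ := hx
  obtain ⟨Y, rfl⟩ := hy
  rw [Ring.inverse_unit] at h ⊢
  have hU : C * X⁻¹ * C = Y := Units.ext (by simpa using h)
  have h2 : C * Y⁻¹ * C = X := by rw [← hU]; group
  simpa using congrArg Units.val h2

/-- The geometric mean `a # b` is the unique positive invertible solution of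
`U_c (a⁻¹) = b`, and it is symmetric in `a` and `b`. -/
theorem stmt11 (a b : A) (ha0 : 0 ≤ a) (hau : IsUnit a) (hb0 : 0 ≤ b) (hbu : IsUnit b) :
    (0 ≤ geomMean a b ∧ IsUnit (geomMean a b) ∧
      geomMean a b * Ring.inverse a * geomMean a b = b) ∧
    (∀ c : A, 0 ≤ c → IsUnit c → c * Ring.inverse a * c = b → c = geomMean a b) ∧
    geomMean a b = geomMean b a := by
  obtain ⟨hex, huniq⟩ := geomMean_main a b ha0 hau hb0 hbu
  obtain ⟨⟨hc0', hcu', heq'⟩, _⟩ := geomMean_main b a hb0 hbu ha0 hau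
  have hsym : geomMean b a = geomMean a b :=
    huniq _ hc0' hcu' (swap_sol hcu' hbu hau heq')
  exact ⟨hex, huniq, hsym.symm⟩
end
end

section
/- Let A be a unital JB-algebra, a, b ∈ A₊° and γ(t) = U_{a^{1/2}}((U_{a^{-1/2}} b)^t). Then for all s, t ∈ [0,1], the geometric mean of γ(t) and γ(s) equals γ((t+s)/2): γ(t) # γ(s) = γ((t+s)/2). -/
noncomputable section

variable {A : Type*} [CStarAlgebra A] [PartialOrder A] [StarOrderedRing A]

/-- The path `γ(t) = U_{a^{1/2}} ((U_{a^{-1/2}} b)^t)`. -/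
def gpath (a b : A) (t : ℝ) : A :=
  cfc Real.sqrt a *
    cfc (fun x : ℝ => x ^ t)
      (cfc (fun x : ℝ => (Real.sqrt x)⁻¹) a * b * cfc (fun x : ℝ => (Real.sqrt x)⁻¹) a) *
    cfc Real.sqrt a

-- spectrum positivity
lemma spec_pos' {a : A} (ha0 : 0 ≤ a) (hau : IsUnit a) :
    ∀ x ∈ spectrum ℝ a, 0 < x := fun x hx =>
  lt_of_le_of_ne (spectrum_nonneg_of_nonneg ha0 hx)
    (fun h => spectrum.zero_notMem ℝ hau (h ▸ hx))

lemma cont_invsqrt {s : Set ℝ} (hs : ∀ x ∈ s, 0 < x) :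
    ContinuousOn (fun x : ℝ => (Real.sqrt x)⁻¹) s :=
  Real.continuous_sqrt.continuousOn.inv₀ fun x hx => (Real.sqrt_pos.mpr (hs x hx)).ne'

lemma cont_rpow {s : Set ℝ} (t : ℝ) (hs : ∀ x ∈ s, 0 < x) :
    ContinuousOn (fun x : ℝ => x ^ t) s := fun x hx =>
  (Real.continuousAt_rpow_const x t (Or.inl (hs x hx).ne')).continuousWithinAt

-- p * q = 1 for p = sqrt, q = inv sqrt
lemma sqrt_mul_invsqrt {a : A} (ha0 : 0 ≤ a) (hau : IsUnit a) :
    cfc Real.sqrt a * cfc (fun x : ℝ => (Real.sqrt x)⁻¹) a = 1 := by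
  rw [← cfc_mul _ _ a Real.continuous_sqrt.continuousOn (cont_invsqrt (spec_pos' ha0 hau))]
  rw [← cfc_const_one ℝ a]
  exact cfc_congr fun x hx =>
    mul_inv_cancel₀ (Real.sqrt_pos.mpr (spec_pos' ha0 hau x hx)).ne'

lemma invsqrt_mul_sqrt {a : A} (ha0 : 0 ≤ a) (hau : IsUnit a) :
    cfc (fun x : ℝ => (Real.sqrt x)⁻¹) a * cfc Real.sqrt a = 1 := by
  rw [← cfc_mul _ _ a (cont_invsqrt (spec_pos' ha0 hau)) Real.continuous_sqrt.continuousOn]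
  rw [← cfc_const_one ℝ a]
  exact cfc_congr fun x hx =>
    inv_mul_cancel₀ (Real.sqrt_pos.mpr (spec_pos' ha0 hau x hx)).ne'

-- sqrt squared = a
lemma sqrt_mul_sqrt' {a : A} (ha0 : 0 ≤ a) :
    cfc Real.sqrt a * cfc Real.sqrt a = a := by
  rw [← cfc_mul _ _ a Real.continuous_sqrt.continuousOn Real.continuous_sqrt.continuousOn]
  conv_rhs => rw [← cfc_id ℝ a]
  exact cfc_congr fun x hx => Real.mul_self_sqrt (spectrum_nonneg_of_nonneg ha0 hx)

-- uniqueness of nonneg square root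
lemma sqrt_unique' {z b : A} (hb0 : 0 ≤ b) (h : b * b = z) :
    cfc Real.sqrt z = b := by
  subst h
  have hb : IsSelfAdjoint b := .of_nonneg hb0
  have h1 : cfc (fun x : ℝ => x * x) b = b * b := by
    rw [cfc_mul (fun x : ℝ => x) (fun x : ℝ => x) b continuous_id.continuousOn continuous_id.continuousOn, cfc_id' ℝ b]
  rw [← h1, ← cfc_comp' Real.sqrt (fun x : ℝ => x * x) b
    Real.continuous_sqrt.continuousOn ((continuous_id.mul continuous_id).continuousOn)]
  conv_rhs => rw [← cfc_id ℝ b]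
  exact cfc_congr fun x hx => Real.sqrt_mul_self (spectrum_nonneg_of_nonneg hb0 hx)

lemma geomMean_eq_of (x y m n : A) (hx0 : 0 ≤ x) (hxu : IsUnit x)
    (hm0 : 0 ≤ m) (hn : x * n = 1) (h : m * n * m = y) :
    geomMean x y = m := by
  set p := cfc Real.sqrt x with hp
  set q := cfc (fun r : ℝ => (Real.sqrt r)⁻¹) x with hqdef
  have hpq : p * q = 1 := sqrt_mul_invsqrt hx0 hxu
  have hqp : q * p = 1 := invsqrt_mul_sqrt hx0 hxu
  have hq : IsSelfAdjoint q := cfc_predicate _ x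
  have hpp : p * p = x := sqrt_mul_sqrt' hx0
  have hqqx : q * q * x = 1 := by
    rw [← hpp, mul_assoc, ← mul_assoc q p p, hqp, one_mul, hqp]
  have hqq : q * q = n := by
    calc q * q = q * q * (x * n) := by rw [hn, mul_one]
      _ = (q * q * x) * n := by simp only [mul_assoc]
      _ = n := by rw [hqqx, one_mul]
  have hsq : (q * m * q) * (q * m * q) = q * y * q := by
    have h1 : (q * m * q) * (q * m * q) = q * (m * n * m) * q := by
      rw [← hqq]; simp only [mul_assoc]
    rw [h1, h]
  have hqmq : 0 ≤ q * m * q := hq.conjugate_nonneg hm0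
  have hw : cfc Real.sqrt (q * y * q) = q * m * q := sqrt_unique' hqmq hsq
  show p * cfc Real.sqrt (q * y * q) * p = m
  rw [hw]
  calc p * (q * m * q) * p = (p * q) * m * (q * p) := by simp only [mul_assoc]
    _ = m := by rw [hpq, hqp, one_mul, mul_one]


lemma conj_mul' {M : Type*} [Monoid M] (a b c d u v : M) (h : b * c = 1) :
    (a * u * b) * (c * v * d) = a * (u * v) * d := by
  calc (a * u * b) * (c * v * d) = a * (u * ((b * c) * v)) * d := by simp only [mul_assoc]
    _ = a * (u * v) * d := by rw [h, one_mul]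

/-- `γ(t) # γ(s) = γ((t+s)/2)`. -/
theorem stmt13 (a b : A) (ha0 : 0 ≤ a) (hau : IsUnit a) (hb0 : 0 ≤ b) (hbu : IsUnit b) :
    ∀ s t : ℝ, s ∈ Set.Icc (0 : ℝ) 1 → t ∈ Set.Icc (0 : ℝ) 1 →
      geomMean (gpath a b t) (gpath a b s) = gpath a b ((t + s) / 2) := by
  intro s t _ _
  have hrq : cfc Real.sqrt a * cfc (fun x : ℝ => (Real.sqrt x)⁻¹) a = 1 :=
    sqrt_mul_invsqrt ha0 hau
  have hqr : cfc (fun x : ℝ => (Real.sqrt x)⁻¹) a * cfc Real.sqrt a = 1 :=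
    invsqrt_mul_sqrt ha0 hau
  set r := cfc Real.sqrt a with hr
  set q := cfc (fun x : ℝ => (Real.sqrt x)⁻¹) a with hq
  have hqsa : IsSelfAdjoint q := cfc_predicate _ a
  have hrsa : IsSelfAdjoint r := cfc_predicate _ a
  have hqu : IsUnit q := ⟨⟨q, r, hqr, hrq⟩, rfl⟩
  set c := q * b * q with hc
  have hc0 : 0 ≤ c := hqsa.conjugate_nonneg hb0
  have hcu : IsUnit c := (hqu.mul hbu).mul hqu
  have hcs := spec_pos' hc0 hcu
  have hcont : ∀ u : ℝ, ContinuousOn (fun x : ℝ => x ^ u) (spectrum ℝ c) :=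
    fun u => cont_rpow u hcs
  have mulc : ∀ u v : ℝ, cfc (fun x : ℝ => x ^ u) c * cfc (fun x : ℝ => x ^ v) c
      = cfc (fun x : ℝ => x ^ (u + v)) c := by
    intro u v
    rw [← cfc_mul _ _ c (hcont u) (hcont v)]
    exact cfc_congr fun x hx => (Real.rpow_add (hcs x hx) u v).symm
  have c0 : cfc (fun x : ℝ => x ^ (0 : ℝ)) c = 1 := by
    rw [← cfc_const_one ℝ c]
    exact cfc_congr fun x _ => Real.rpow_zero x
  have hct0 : ∀ u : ℝ, 0 ≤ cfc (fun x : ℝ => x ^ u) c := fun u =>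
    cfc_nonneg fun x hx => Real.rpow_nonneg (hcs x hx).le u
  have hgp : ∀ u : ℝ, gpath a b u = r * cfc (fun x : ℝ => x ^ u) c * r := fun u => rfl
  set u := (t + s) / 2 with hu
  set n := q * cfc (fun x : ℝ => x ^ (-t)) c * q with hn_def
  have hxn : gpath a b t * n = 1 := by
    rw [hgp, hn_def, conj_mul' _ _ _ _ _ _ hrq, mulc, add_neg_cancel, c0, mul_one, hrq]
  have hnx : n * gpath a b t = 1 := by
    rw [hgp, hn_def, conj_mul' _ _ _ _ _ _ hqr, mulc, neg_add_cancel, c0, mul_one, hqr]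
  have hxu : IsUnit (gpath a b t) := ⟨⟨_, n, hxn, hnx⟩, rfl⟩
  have hx0 : 0 ≤ gpath a b t := by rw [hgp]; exact hrsa.conjugate_nonneg (hct0 t)
  have hm0 : 0 ≤ gpath a b u := by rw [hgp]; exact hrsa.conjugate_nonneg (hct0 u)
  have key : gpath a b u * n * gpath a b u = gpath a b s := by
    rw [hgp, hgp, hn_def, conj_mul' _ _ _ _ _ _ hrq, conj_mul' _ _ _ _ _ _ hqr,
      mulc, mulc]
    have : u + -t + u = s := by rw [hu]; ring
    rw [this]
  exact geomMean_eq_of _ _ _ n hx0 hxu hm0 hxn key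
end
end

section
/- Let M and N be metric spaces such that for every pair x, y in M (resp. N) there exist z_{xy} ∈ M, a bijective isometry ψ_{xy} of M, and a constant k_{xy} > 1 with (i) ψ_{xy}(x) = y and ψ_{xy}(y) = x, (ii) ψ_{xy}(z_{xy}) = z_{xy}, and (iii) d(u, ψ_{xy}(u)) ≥ k_{xy}·d(u, z_{xy}) for all u. Then any bijective isometry φ : M → N satisfies φ(z_{xy}) = z_{φ(x)φ(y)}. -/
/-- Any bijective self-isometry fixing `a` and `b` must fix the distinguished point `z'`. -/
lemma stmt14_aux {N : Type*} [MetricSpace N] (a b z' : N) (Ψ : N ≃ᵢ N)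
    (hΨa : Ψ a = b) (hΨb : Ψ b = a) (hΨz : Ψ z' = z') (k : ℝ) (hk : 1 < k)
    (hd : ∀ u : N, k * dist u z' ≤ dist u (Ψ u)) :
    ∀ T : N ≃ᵢ N, T a = a → T b = b → T z' = z' := by
  have hΨsb : Ψ.symm b = a := by rw [← hΨa, Ψ.symm_apply_apply]
  have hΨsa : Ψ.symm a = b := by rw [← hΨb, Ψ.symm_apply_apply]
  have hΨsz : Ψ.symm z' = z' := by
    conv_lhs => rw [← hΨz]
    exact Ψ.symm_apply_apply z'
  set SS : Set ℝ := (fun T : N ≃ᵢ N => dist (T z') z') '' {T | T a = a ∧ T b = b} with hSS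
  have hne : (0 : ℝ) ∈ SS := ⟨IsometryEquiv.refl N, ⟨rfl, rfl⟩, dist_self z'⟩
  have hbdd : BddAbove SS := by
    refine ⟨2 * dist z' a, ?_⟩
    rintro r ⟨S, ⟨hSa, hSb⟩, rfl⟩
    calc dist (S z') z' ≤ dist (S z') a + dist a z' := dist_triangle _ _ _
      _ = dist (S z') (S a) + dist a z' := by rw [hSa]
      _ = dist z' a + dist a z' := by rw [S.dist_eq]
      _ = 2 * dist z' a := by rw [dist_comm a z']; ring
  have hstep : ∀ S : N ≃ᵢ N, S a = a → S b = b → k * dist (S z') z' ≤ sSup SS := by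
    intro S hSa hSb
    have hSsa : S.symm a = a := by
      conv_lhs => rw [← hSa]
      exact S.symm_apply_apply a
    have hSsb : S.symm b = b := by
      conv_lhs => rw [← hSb]
      exact S.symm_apply_apply b
    set S' : N ≃ᵢ N := ((S.trans Ψ).trans S.symm).trans Ψ.symm with hS'
    have hS'app : ∀ u, S' u = Ψ.symm (S.symm (Ψ (S u))) := fun u => rfl
    have hS'a : S' a = a := by rw [hS'app, hSa, hΨa, hSsb, hΨsb]
    have hS'b : S' b = b := by rw [hS'app, hSb, hΨb, hSsa, hΨsa]
    have hdist : dist (S' z') z' = dist (S z') (Ψ (S z')) := by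
      calc dist (S' z') z' = dist (Ψ.symm (S.symm (Ψ (S z')))) (Ψ.symm z') := by
            rw [hS'app, hΨsz]
        _ = dist (S.symm (Ψ (S z'))) z' := by rw [Ψ.symm.dist_eq]
        _ = dist (S.symm (Ψ (S z'))) (S.symm (S z')) := by rw [S.symm_apply_apply]
        _ = dist (Ψ (S z')) (S z') := by rw [S.symm.dist_eq]
        _ = dist (S z') (Ψ (S z')) := dist_comm _ _
    have hmem : dist (S' z') z' ∈ SS := ⟨S', ⟨hS'a, hS'b⟩, rfl⟩
    calc k * dist (S z') z' ≤ dist (S z') (Ψ (S z')) := hd (S z')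
      _ = dist (S' z') z' := hdist.symm
      _ ≤ sSup SS := le_csSup hbdd hmem
  have hsup0 : sSup SS ≤ 0 := by
    have hk0 : (0 : ℝ) < k := by linarith
    have hle : sSup SS ≤ sSup SS / k := by
      apply csSup_le ⟨0, hne⟩
      rintro r ⟨S, ⟨hSa, hSb⟩, rfl⟩
      rw [le_div_iff₀ hk0, mul_comm]
      exact hstep S hSa hSb
    have hnn : (0 : ℝ) ≤ sSup SS := le_csSup hbdd hne
    have hmul : sSup SS * k ≤ sSup SS := (le_div_iff₀ hk0).mp hle
    nlinarith [hmul, hnn]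
  intro T hTa hTb
  have h1 : k * dist (T z') z' ≤ 0 := le_trans (hstep T hTa hTb) hsup0
  have h2 : dist (T z') z' = 0 := by nlinarith [dist_nonneg (x := T z') (y := z')]
  exact dist_eq_zero.mp h2

/-- Molnár-type lemma: if in each metric space every pair `x, y` admits a distinguished
point `z x y`, a bijective isometry `ψ x y` swapping `x` and `y`, fixing `z x y`, and
satisfying `d(u, ψ x y u) ≥ k x y · d(u, z x y)` with `k x y > 1`, then any bijective
isometry between the spaces maps `z x y` to `z (φ x) (φ y)`. -/
theorem stmt14 {M N : Type*} [MetricSpace M] [MetricSpace N]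
    (zM : M → M → M) (ψM : M → M → (M → M)) (kM : M → M → ℝ)
    (hM : ∀ x y : M, Function.Bijective (ψM x y) ∧ Isometry (ψM x y) ∧
      ψM x y x = y ∧ ψM x y y = x ∧ ψM x y (zM x y) = zM x y ∧ 1 < kM x y ∧
      ∀ u : M, kM x y * dist u (zM x y) ≤ dist u (ψM x y u))
    (zN : N → N → N) (ψN : N → N → (N → N)) (kN : N → N → ℝ)
    (hN : ∀ x y : N, Function.Bijective (ψN x y) ∧ Isometry (ψN x y) ∧
      ψN x y x = y ∧ ψN x y y = x ∧ ψN x y (zN x y) = zN x y ∧ 1 < kN x y ∧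
      ∀ u : N, kN x y * dist u (zN x y) ≤ dist u (ψN x y u))
    (φ : M → N) (hφbij : Function.Bijective φ) (hφiso : Isometry φ) :
    ∀ x y : M, φ (zM x y) = zN (φ x) (φ y) := by
  intro x y
  obtain ⟨hbM, hiM, hxyM, hyxM, hzM', hkM, hdM⟩ := hM x y
  obtain ⟨hbN, hiN, hxyN, hyxN, hzN', hkN, hdN⟩ := hN (φ x) (φ y)
  -- package the maps as isometry equivalences
  let Φ : M ≃ᵢ N := { toEquiv := Equiv.ofBijective φ hφbij, isometry_toFun := hφiso }
  let ΨM' : M ≃ᵢ M := { toEquiv := Equiv.ofBijective _ hbM, isometry_toFun := hiM }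
  let Ψ : N ≃ᵢ N := { toEquiv := Equiv.ofBijective _ hbN, isometry_toFun := hiN }
  have hΦapp : ∀ u : M, Φ u = φ u := fun u => rfl
  have hΨMapp : ∀ u : M, ΨM' u = ψM x y u := fun u => rfl
  have hΨapp : ∀ u : N, Ψ u = ψN (φ x) (φ y) u := fun u => rfl
  let g : N ≃ᵢ N := (Φ.symm.trans ΨM').trans Φ
  have hgapp : ∀ u : N, g u = Φ (ΨM' (Φ.symm u)) := fun u => rfl
  set p : N := φ (zM x y) with hp
  set z' : N := zN (φ x) (φ y) with hz'
  -- g swaps φ x, φ y, fixes p, and expands distances to p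
  have hΦsx : Φ.symm (φ x) = x := by
    conv_lhs => rw [show φ x = Φ x from rfl]
    exact Φ.symm_apply_apply x
  have hΦsy : Φ.symm (φ y) = y := by
    conv_lhs => rw [show φ y = Φ y from rfl]
    exact Φ.symm_apply_apply y
  have hga : g (φ x) = φ y := by rw [hgapp, hΦsx, hΨMapp, hxyM]; rfl
  have hgb : g (φ y) = φ x := by rw [hgapp, hΦsy, hΨMapp, hyxM]; rfl
  have hgsa : g.symm (φ y) = φ x := by
    conv_lhs => rw [← hga]
    exact g.symm_apply_apply _
  have hgsb : g.symm (φ x) = φ y := by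
    conv_lhs => rw [← hgb]
    exact g.symm_apply_apply _
  have hdg : ∀ u : N, kM x y * dist u p ≤ dist u (g u) := by
    intro u
    have h1 : dist (Φ.symm u) (zM x y) = dist u p := by
      rw [← Φ.dist_eq, Φ.apply_symm_apply]; rfl
    have h2 : dist u (g u) = dist (Φ.symm u) (ψM x y (Φ.symm u)) := by
      rw [hgapp]
      conv_lhs => rw [← Φ.apply_symm_apply u]
      rw [Φ.dist_eq, Φ.symm_apply_apply]; rfl
    rw [← h1, h2]
    exact hdM (Φ.symm u)
  -- apply the key uniqueness lemma to T = g⁻¹ ∘ Ψ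
  let T : N ≃ᵢ N := Ψ.trans g.symm
  have hTapp : ∀ u : N, T u = g.symm (Ψ u) := fun u => rfl
  have hTa : T (φ x) = φ x := by rw [hTapp, hΨapp, hxyN, hgsa]
  have hTb : T (φ y) = φ y := by rw [hTapp, hΨapp, hyxN, hgsb]
  have hTz : T z' = z' :=
    stmt14_aux (φ x) (φ y) z' Ψ (by rw [hΨapp]; exact hxyN) (by rw [hΨapp]; exact hyxN)
      (by rw [hΨapp]; exact hzN') (kN (φ x) (φ y)) hkN (fun u => by rw [hΨapp]; exact hdN u)
      T hTa hTb
  -- deduce g z' = z'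
  have hgz : g z' = z' := by
    have h1 : g.symm (Ψ z') = z' := hTz
    rw [show Ψ z' = z' from by rw [hΨapp]; exact hzN'] at h1
    conv_lhs => rw [← h1]
    exact g.apply_symm_apply z'
  -- conclude p = z'
  have hfinal : kM x y * dist z' p ≤ 0 := by
    have := hdg z'
    rw [hgz, dist_self] at this
    exact this
  have hd0 : dist z' p = 0 := by nlinarith [dist_nonneg (x := z') (y := p), hkM]
  have := dist_eq_zero.mp hd0
  rw [hp, hz'] at this
  exact this.symm
end

section
/- Let A be a unital JB-algebra and c ∈ A₊°. The symmetry S_c : A₊° → A₊° defined by S_c(a) := U_c(a⁻¹) satisfies: S_c(c) = c, S_c ∘ S_c = id, and d_T(S_c(a), a) = 2·d_T(c, a) for all a ∈ A₊°. In particular c is the unique fixed point of S_c. -/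
noncomputable section

variable {A : Type*} [CStarAlgebra A] [PartialOrder A] [StarOrderedRing A]

/-- Inverse of a selfadjoint unit is selfadjoint. -/
lemma aux_star_inv (s : Aˣ) (hs : IsSelfAdjoint (s : A)) :
    IsSelfAdjoint ((s⁻¹ : Aˣ) : A) := by
  have h1 : star ((s⁻¹ : Aˣ) : A) * s = 1 := by
    have := congrArg star (Units.mul_inv s)
    rw [star_mul, hs.star_eq, star_one] at this
    exact this
  calc star ((s⁻¹ : Aˣ) : A) = star ((s⁻¹ : Aˣ) : A) * ((s : A) * ↑s⁻¹) := by
        simp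
    _ = ((s⁻¹ : Aˣ) : A) := by rw [← mul_assoc, h1, one_mul]

/-- Conjugation by a selfadjoint unit is an order isomorphism. -/
lemma aux_conj_le_conj_iff (s : Aˣ) (hs : IsSelfAdjoint (s : A)) (x y : A) :
    (s : A) * x * s ≤ (s : A) * y * s ↔ x ≤ y := by
  constructor
  · intro h
    have := (aux_star_inv s hs).conjugate_le_conjugate h
    simpa [mul_assoc] using this
  · intro h
    exact hs.conjugate_le_conjugate h

lemma aux_Mrel_eq_norm [Nontrivial A] {a b x : A} (hx : 0 ≤ x) (hxu : IsUnit x)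
    (h : ∀ l : ℝ, 0 ≤ l → (a ≤ l • b ↔ x ≤ l • 1)) : Mrel a b = ‖x‖ := by
  have hx0 : (0 : ℝ) < ‖x‖ := norm_pos_iff.mpr hxu.ne_zero
  have key : ∀ l : ℝ, 0 ≤ l → (x ≤ l • 1 ↔ ‖x‖ ≤ l) := by
    intro l hl
    rw [← Algebra.algebraMap_eq_smul_one]
    exact (CStarAlgebra.norm_le_iff_le_algebraMap x hl hx).symm
  have hset : {l : ℝ | 0 < l ∧ a ≤ l • b} = Set.Ici ‖x‖ := by
    ext l
    constructor
    · rintro ⟨hl, hab⟩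
      exact (key l hl.le).mp ((h l hl.le).mp hab)
    · intro hl
      have hl0 : 0 < l := lt_of_lt_of_le hx0 hl
      exact ⟨hl0, (h l hl0.le).mpr ((key l hl0.le).mpr hl)⟩
  rw [Mrel, hset, csInf_Ici]

/-- Positive square root of a positive unit, as a unit. -/
lemma aux_sqrt_unit (a : Aˣ) (ha : 0 ≤ (a : A)) :
    ∃ t : Aˣ, 0 ≤ (t : A) ∧ (t : A) * t = a := by
  have h1 : CFC.sqrt (a : A) * CFC.sqrt (a : A) = a := CFC.sqrt_mul_sqrt_self _ ha
  have hu : IsUnit (CFC.sqrt (a : A)) := by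
    rw [← isUnit_mul_self_iff, h1]; exact a.isUnit
  exact ⟨hu.unit, by simpa [hu.unit_spec] using CFC.sqrt_nonneg (a := (a : A)),
    by simp [hu.unit_spec, h1]⟩

lemma aux_conj_smul (v : Aˣ) (b : A) (hb : (v : A) * b * v = 1) (l : ℝ) :
    (v : A) * (l • b) * v = l • (1 : A) := by
  rw [mul_smul_comm, smul_mul_assoc, hb]

lemma aux_Mrel_eq (a b t : Aˣ) [Nontrivial A] (ha : 0 ≤ (a : A)) (ht0 : 0 ≤ (t : A))
    (htb : (t : A) * t = b) : Mrel (a : A) (b : A) = ‖((t⁻¹ : Aˣ) : A) * a * ↑t⁻¹‖ := by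
  have hv0 : 0 ≤ ((t⁻¹ : Aˣ) : A) := CFC.inv_nonneg_of_nonneg t ht0
  have hv : IsSelfAdjoint ((t⁻¹ : Aˣ) : A) := .of_nonneg hv0
  have hvbv : ((t⁻¹ : Aˣ) : A) * b * ↑t⁻¹ = 1 := by
    rw [← htb, ← mul_assoc]
    simp [mul_assoc]
  refine aux_Mrel_eq_norm ?_ ?_ ?_
  · simpa [hv.star_eq] using star_left_conjugate_nonneg ha ((t⁻¹ : Aˣ) : A)
  · exact ((t⁻¹ : Aˣ).isUnit.mul a.isUnit).mul (t⁻¹ : Aˣ).isUnit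
  · intro l _
    rw [← aux_conj_le_conj_iff t⁻¹ hv (a : A) (l • (b : A)), aux_conj_smul _ _ hvbv]

lemma aux_Mrel_S_left (c a : Aˣ) [Nontrivial A] (hc : 0 ≤ (c : A)) (ha : 0 ≤ (a : A)) :
    Mrel ((c : A) * ↑a⁻¹ * c) (a : A) = (Mrel (c : A) (a : A)) ^ 2 := by
  obtain ⟨t, ht0, hta⟩ := aux_sqrt_unit a ha
  have htu : t * t = a := Units.ext hta
  have hv0 : 0 ≤ ((t⁻¹ : Aˣ) : A) := CFC.inv_nonneg_of_nonneg t ht0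
  have hv : IsSelfAdjoint ((t⁻¹ : Aˣ) : A) := .of_nonneg hv0
  set x : A := ((t⁻¹ : Aˣ) : A) * c * ↑t⁻¹ with hxdef
  have hx0 : 0 ≤ x := by simpa [hxdef, hv.star_eq] using star_left_conjugate_nonneg hc ((t⁻¹ : Aˣ) : A)
  have hxsa : IsSelfAdjoint x := .of_nonneg hx0
  have hxu : IsUnit x := ((t⁻¹ : Aˣ).isUnit.mul c.isUnit).mul (t⁻¹ : Aˣ).isUnit
  have hvav : ((t⁻¹ : Aˣ) : A) * a * ↑t⁻¹ = 1 := by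
    rw [← hta, ← mul_assoc]; simp [mul_assoc]
  have hvv : ((t⁻¹ : Aˣ) : A) * ↑t⁻¹ = ↑a⁻¹ := by
    rw [← Units.val_mul, ← mul_inv_rev, htu]
  have hS : ((t⁻¹ : Aˣ) : A) * ((c : A) * ↑a⁻¹ * c) * ↑t⁻¹ = x * x := by
    rw [hxdef, ← hvv]; simp only [mul_assoc]
  have h1 : Mrel ((c : A) * ↑a⁻¹ * c) (a : A) = ‖x * x‖ := by
    refine aux_Mrel_eq_norm (star_mul_self_nonneg x |>.trans_eq (by rw [hxsa.star_eq]))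
      (hxu.mul hxu) ?_
    intro l _
    rw [← aux_conj_le_conj_iff t⁻¹ hv _ (l • (a : A)), aux_conj_smul _ _ hvav, hS]
  have h2 : Mrel (c : A) (a : A) = ‖x‖ := aux_Mrel_eq c a t hc ht0 hta
  rw [h1, h2]
  nth_rewrite 1 [← hxsa.star_eq]
  rw [CStarRing.norm_star_mul_self, sq]

lemma aux_Mrel_S_right (c a : Aˣ) [Nontrivial A] (hc : 0 ≤ (c : A)) (ha : 0 ≤ (a : A)) :
    Mrel (a : A) ((c : A) * ↑a⁻¹ * c) = (Mrel (a : A) (c : A)) ^ 2 := by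
  obtain ⟨t, ht0, hta⟩ := aux_sqrt_unit a ha
  obtain ⟨s, hs0, hsc⟩ := aux_sqrt_unit c hc
  have htu : t * t = a := Units.ext hta
  have hsu : s * s = c := Units.ext hsc
  have ht : IsSelfAdjoint ((t : Aˣ) : A) := .of_nonneg ht0
  have hu0 : 0 ≤ ((s⁻¹ : Aˣ) : A) := CFC.inv_nonneg_of_nonneg s hs0
  have hcinv0 : 0 ≤ ((c⁻¹ : Aˣ) : A) := CFC.inv_nonneg_of_nonneg c hc
  have hcinv : IsSelfAdjoint ((c⁻¹ : Aˣ) : A) := .of_nonneg hcinv0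
  have huu : ((s⁻¹ : Aˣ) : A) * ↑s⁻¹ = ↑c⁻¹ := by
    rw [← Units.val_mul, ← mul_inv_rev, hsu]
  -- z := u * t  where u = s⁻¹
  set z : A := ((s⁻¹ : Aˣ) : A) * t with hzdef
  have hstarz : star z = (t : A) * ↑s⁻¹ := by
    rw [hzdef, star_mul, ht.star_eq, (IsSelfAdjoint.of_nonneg hu0).star_eq]
  set y : A := (t : A) * ↑c⁻¹ * t with hydef
  have hy_eq : y = star z * z := by
    rw [hydef, ← huu, hstarz, hzdef]; simp only [mul_assoc]
  have hy0 : 0 ≤ y := hy_eq ▸ star_mul_self_nonneg z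
  have hysa : IsSelfAdjoint y := .of_nonneg hy0
  have hyu : IsUnit y := (t.isUnit.mul (c⁻¹ : Aˣ).isUnit).mul t.isUnit
  -- step 1 : Mrel a (c a⁻¹ c) = ‖y * y‖
  have htat : ((t : Aˣ) : A) * ↑a⁻¹ * t = 1 := by
    have : (a⁻¹ : Aˣ) = t⁻¹ * t⁻¹ := by rw [← mul_inv_rev, htu]
    rw [this]
    simp [mul_assoc, ← Units.val_mul]
  have hconj1 : ∀ l : ℝ, ((c⁻¹ : Aˣ) : A) * (l • ((c : A) * ↑a⁻¹ * c)) * ↑c⁻¹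
      = l • ((a⁻¹ : Aˣ) : A) := by
    intro l
    rw [mul_smul_comm, smul_mul_assoc]
    congr 1
    calc ((c⁻¹ : Aˣ) : A) * ((c : A) * ↑a⁻¹ * c) * ↑c⁻¹
        = ((c⁻¹ : Aˣ) : A) * (c : A) * ↑a⁻¹ * ((c : A) * ↑c⁻¹) := by
          simp only [mul_assoc]
      _ = ((a⁻¹ : Aˣ) : A) := by simp [← Units.val_mul]
  have hmid : ((t : Aˣ) : A) * (((c⁻¹ : Aˣ) : A) * (a : A) * ↑c⁻¹) * t = y * y := by
    rw [hydef, ← hta]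
    simp only [mul_assoc]
  have h1 : Mrel (a : A) ((c : A) * ↑a⁻¹ * c) = ‖y * y‖ := by
    refine aux_Mrel_eq_norm (by simpa [hysa.star_eq] using star_mul_self_nonneg y)
      (hyu.mul hyu) ?_
    intro l _
    rw [← aux_conj_le_conj_iff c⁻¹ hcinv _ _, hconj1 l,
      ← aux_conj_le_conj_iff t ht _ _, aux_conj_smul t _ htat, hmid]
  have h2 : Mrel (a : A) (c : A) = ‖((s⁻¹ : Aˣ) : A) * a * ↑s⁻¹‖ :=
    aux_Mrel_eq a c s ha hs0 hsc
  have hw_eq : ((s⁻¹ : Aˣ) : A) * ↑a * ↑s⁻¹ = z * star z := by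
    rw [hstarz, hzdef, ← hta]; simp only [mul_assoc]
  have hny : ‖y‖ = ‖z‖ * ‖z‖ := by rw [hy_eq, CStarRing.norm_star_mul_self]
  have hnyy : ‖y * y‖ = ‖y‖ * ‖y‖ := by
    nth_rewrite 1 [← hysa.star_eq]
    rw [CStarRing.norm_star_mul_self]
  have hnw : ‖((s⁻¹ : Aˣ) : A) * ↑a * ↑s⁻¹‖ = ‖z‖ * ‖z‖ := by
    rw [hw_eq, CStarRing.norm_self_mul_star]
  rw [h1, h2, hnyy, hny, hnw]; ring

lemma aux_max_sq {p q : ℝ} (hp : 0 ≤ p) (hq : 0 ≤ q) :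
    max (p ^ 2) (q ^ 2) = (max p q) ^ 2 := by
  rcases le_total p q with h | h
  · rw [max_eq_right (pow_le_pow_left₀ hp h 2), max_eq_right h]
  · rw [max_eq_left (pow_le_pow_left₀ hq h 2), max_eq_left h]

/-- The symmetry `S_c(a) = U_c (a⁻¹)` fixes `c`, is an involution, satisfies
`d_T(S_c(a), a) = 2 d_T(c, a)`, and has `c` as its unique fixed point. -/
theorem stmt15 (c : A) (hc0 : 0 ≤ c) (hcu : IsUnit c) :
    c * Ring.inverse c * c = c ∧
    (∀ a : A, 0 ≤ a → IsUnit a → c * Ring.inverse (c * Ring.inverse a * c) * c = a) ∧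
    (∀ a : A, 0 ≤ a → IsUnit a → dT (c * Ring.inverse a * c) a = 2 * dT c a) ∧
    (∀ a : A, 0 ≤ a → IsUnit a → c * Ring.inverse a * c = a → a = c) := by
  obtain hA | hA := subsingleton_or_nontrivial A
  · have hM : ∀ x y : A, Mrel x y = 0 := by
      intro x y
      have hset : {l : ℝ | 0 < l ∧ x ≤ l • y} = Set.Ioi 0 := by
        ext l
        simp [Subsingleton.elim x (l • y), Set.mem_Ioi]
      rw [Mrel, hset, csInf_Ioi]
    refine ⟨Subsingleton.elim _ _, fun a _ _ => Subsingleton.elim _ _,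
      fun a _ _ => ?_, fun a _ _ _ => Subsingleton.elim _ _⟩
    simp [dT, hM]
  · lift c to Aˣ using hcu
    refine ⟨by simp [Ring.inverse_unit], ?_, ?_, ?_⟩
    · intro a ha0 hau
      lift a to Aˣ using hau
      rw [Ring.inverse_unit, show ((c : A) * ↑a⁻¹ * ↑c : A) = ↑(c * a⁻¹ * c) by
        simp [Units.val_mul], Ring.inverse_unit, ← Units.val_mul, ← Units.val_mul]
      congr 1
      group
    · intro a ha0 hau
      lift a to Aˣ using hau
      rw [Ring.inverse_unit, dT, dT,
        aux_Mrel_S_left c a hc0 ha0, aux_Mrel_S_right c a hc0 ha0]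
      obtain ⟨ta, hta0, htaa⟩ := aux_sqrt_unit a ha0
      obtain ⟨tc, htc0, htcc⟩ := aux_sqrt_unit c hc0
      have hp : 0 ≤ Mrel (c : A) (a : A) := by
        rw [aux_Mrel_eq c a ta hc0 hta0 htaa]; exact norm_nonneg _
      have hq : 0 ≤ Mrel (a : A) (c : A) := by
        rw [aux_Mrel_eq a c tc ha0 htc0 htcc]; exact norm_nonneg _
      rw [aux_max_sq hp hq, Real.log_pow]
      push_cast
      ring
    · intro a ha0 hau
      lift a to Aˣ using hau
      rw [Ring.inverse_unit]
      intro heq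
      have hequ : c * a⁻¹ * c = a := Units.ext (by simpa [Units.val_mul] using heq)
      obtain ⟨s, hs0, hsc⟩ := aux_sqrt_unit c hc0
      have hscu : s * s = c := Units.ext hsc
      set B : Aˣ := s⁻¹ * a * s⁻¹ with hBdef
      have hBB : B * B = 1 := by
        have hac : a * c⁻¹ * a = c := by
          calc a * c⁻¹ * a = a * c⁻¹ * (c * a⁻¹ * c) := by rw [hequ]
            _ = c := by group
        calc B * B = s⁻¹ * (a * c⁻¹ * a) * s⁻¹ := by rw [hBdef, ← hscu]; group
          _ = 1 := by rw [hac, ← hscu]; group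
      have hu0 : 0 ≤ ((s⁻¹ : Aˣ) : A) := CFC.inv_nonneg_of_nonneg s hs0
      have hu : IsSelfAdjoint ((s⁻¹ : Aˣ) : A) := .of_nonneg hu0
      have hB0 : 0 ≤ (B : A) := by
        have : (B : A) = ((s⁻¹ : Aˣ) : A) * ↑a * ↑s⁻¹ := by simp [hBdef, Units.val_mul]
        rw [this]
        simpa [hu.star_eq] using star_left_conjugate_nonneg ha0 ((s⁻¹ : Aˣ) : A)
      have hB1 : (B : A) = 1 := by
        have h1 : (B : A) * (B : A) = 1 := by
          rw [← Units.val_mul, hBB, Units.val_one]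
        calc (B : A) = CFC.sqrt ((B : A) * B) := (CFC.sqrt_mul_self (B : A) hB0).symm
          _ = 1 := by rw [h1, CFC.sqrt_one]
      have hBu : B = 1 := Units.ext (by simpa using hB1)
      have : a = c := by
        have := hBu
        rw [hBdef] at this
        calc a = s * (s⁻¹ * a * s⁻¹) * s := by group
          _ = s * 1 * s := by rw [this]
          _ = c := by rw [← hscu]; group
      exact congrArg Units.val this
end
end

section
/- Let H be a Hilbert space with dim H ≥ 3 and let p, q be nonmaximal nontrivial orthogonal projections on H (nonmaximal meaning there is a projection strictly between the projection and the identity). Then there is a finite chain of nonmaximal nontrivial projections p = p₁, …, p_n = q such that consecutive projections are orthogonal and p_i + p_{i+1} < 1 for all i. -/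
/-!
A nonmaximal projection annihilates two nonzero orthogonal vectors `u, v`, and then it is
adjacent to the rank-one projection onto `u`: their sum is a projection killing `v`, hence
strictly below `1`. Since `dim H ≥ 3`, any two vectors have a common nonzero orthogonal vector,
so for `e ∈ ker p` and `f ∈ ker q` there is `g ⊥ e, f`, and the rank-one projections onto
`e`, `g`, `f` link `p` to `q`. The same dimension count makes every rank-one projection
nonmaximal.
-/

set_option linter.unusedSectionVars false

noncomputable section

variable {H : Type*} [NormedAddCommGroup H] [InnerProductSpace ℂ H] [CompleteSpace H]

/-- A (selfadjoint) projection on `H`. -/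
def IsProjOp (P : H →L[ℂ] H) : Prop := IsIdempotentElem P ∧ IsSelfAdjoint P

/-- The strict order `P < Q` on operators: `Q - P` is a nonzero positive operator. -/
def ltOp (P Q : H →L[ℂ] H) : Prop := (Q - P).IsPositive ∧ P ≠ Q

/-- A nontrivial projection: neither `0` nor `1`. -/
def NontrivProj (P : H →L[ℂ] H) : Prop := P ≠ 0 ∧ P ≠ 1

/-- A nonmaximal projection: some projection lies strictly between it and the identity. -/
def NonmaxProj (P : H →L[ℂ] H) : Prop :=
  ∃ Q : H →L[ℂ] H, IsProjOp Q ∧ ltOp P Q ∧ ltOp Q 1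

open Submodule
open scoped InnerProductSpace

lemma IsSelfAdjoint.mul_eq_zero_symm {R : Type*} [Semiring R] [StarRing R] {a b : R}
    (ha : IsSelfAdjoint a) (hb : IsSelfAdjoint b) (hab : a * b = 0) : b * a = 0 := by
  simpa [ha.star_eq, hb.star_eq] using congr(star $hab)

section InnerProductSpace

variable {𝕜 E : Type*} [RCLike 𝕜] [NormedAddCommGroup E] [InnerProductSpace 𝕜 E]

lemma Submodule.exists_ne_zero_mem_orthogonal_of_rank_lt {K : Submodule 𝕜 E}
    [K.HasOrthogonalProjection] (hK : Module.rank 𝕜 K < Module.rank 𝕜 E) :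
    ∃ v ∈ Kᗮ, v ≠ 0 := by
  refine Submodule.exists_mem_ne_zero_of_ne_bot fun hbot => hK.ne ?_
  rw [orthogonal_eq_bot_iff.1 hbot, rank_top]

lemma exists_ne_zero_inner_eq_zero_inner_eq_zero (hE : 3 ≤ Module.rank 𝕜 E) (a b : E) :
    ∃ v : E, v ≠ 0 ∧ ⟪a, v⟫_𝕜 = 0 ∧ ⟪b, v⟫_𝕜 = 0 := by
  let K := span 𝕜 {a, b}
  have : FiniteDimensional 𝕜 K :=
    FiniteDimensional.span_of_finite 𝕜 ((Set.finite_singleton b).insert a)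
  have hK : Module.rank 𝕜 K < Module.rank 𝕜 E := by
    calc Module.rank 𝕜 K ≤ Cardinal.mk ({a, b} : Set E) := rank_span_le _
      _ ≤ 2 := by simpa [one_add_one_eq_two] using Cardinal.mk_insert_le (a := a) (s := {b})
      _ < 3 := by norm_num
      _ ≤ Module.rank 𝕜 E := hE
  obtain ⟨v, hvK, hv⟩ := K.exists_ne_zero_mem_orthogonal_of_rank_lt hK
  rw [mem_orthogonal] at hvK
  exact ⟨v, hv, hvK a (subset_span (by simp)), hvK b (subset_span (by simp))⟩

lemma starProjection_span_singleton_apply_eq_zero_iff {e x : E} :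
    (𝕜 ∙ e).starProjection x = 0 ↔ ⟪e, x⟫_𝕜 = 0 := by
  rw [starProjection_apply_eq_zero_iff, mem_orthogonal_singleton_iff_inner_right]

lemma starProjection_span_singleton_self (e : E) : (𝕜 ∙ e).starProjection e = e :=
  starProjection_eq_self_iff.2 (mem_span_singleton_self e)

lemma mul_starProjection_span_singleton_eq_zero {P : E →L[𝕜] E} {e : E} (he : P e = 0) :
    P * (𝕜 ∙ e).starProjection = 0 := by
  ext x
  obtain ⟨c, hc⟩ := mem_span_singleton.1 ((𝕜 ∙ e).starProjection_apply_mem x)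
  simp [← hc, he]

lemma IsSelfAdjoint.inner_apply_apply_eq_zero [CompleteSpace E] {A B : E →L[𝕜] E}
    (hA : IsSelfAdjoint A) (hAB : A * B = 0) (x y : E) : ⟪A x, B y⟫_𝕜 = 0 := by
  calc ⟪A x, B y⟫_𝕜 = ⟪x, (A * B) y⟫_𝕜 := hA.isSymmetric x (B y)
    _ = 0 := by rw [hAB, zero_apply, inner_zero_right]

end InnerProductSpace

lemma isProjOp_iff_isStarProjection {P : H →L[ℂ] H} : IsProjOp P ↔ IsStarProjection P :=
  (isStarProjection_iff P).symm

lemma ltOp_iff_lt {P Q : H →L[ℂ] H} : ltOp P Q ↔ P < Q := by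
  rw [lt_iff_le_and_ne]; rfl

lemma NonmaxProj.ne_one {P : H →L[ℂ] H} (hP : NonmaxProj P) : P ≠ 1 :=
  let ⟨_, _, hPQ, hQ1⟩ := hP
  ((ltOp_iff_lt.1 hPQ).trans (ltOp_iff_lt.1 hQ1)).ne

def Adjacent (P R : H →L[ℂ] H) : Prop := P * R = 0 ∧ ltOp (P + R) 1

lemma adjacent_of_mul_eq_zero {P R : H →L[ℂ] H} (hP : IsStarProjection P)
    (hR : IsStarProjection R) (hPR : P * R = 0) {z : H} (hz : z ≠ 0) (hPz : P z = 0)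
    (hRz : R z = 0) : Adjacent P R := by
  refine ⟨hPR, ltOp_iff_lt.2 <| (hP.add hR hPR).le_one.lt_of_ne fun h => hz ?_⟩
  simpa [hPz, hRz] using congr($h z).symm

lemma Adjacent.symm {P R : H →L[ℂ] H} (hP : IsStarProjection P) (hR : IsStarProjection R)
    (h : Adjacent P R) : Adjacent R P :=
  ⟨hP.isSelfAdjoint.mul_eq_zero_symm hR.isSelfAdjoint h.1, add_comm P R ▸ h.2⟩

lemma adjacent_starProjection_span_singleton {P : H →L[ℂ] H} (hP : IsStarProjection P)
    {e z : H} (he : P e = 0) (hz : z ≠ 0) (hPz : P z = 0) (hez : ⟪e, z⟫_ℂ = 0) :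
    Adjacent P (ℂ ∙ e).starProjection :=
  adjacent_of_mul_eq_zero hP isStarProjection_starProjection
    (mul_starProjection_span_singleton_eq_zero he) hz hPz
    (starProjection_span_singleton_apply_eq_zero_iff.2 hez)

lemma adjacent_starProjection_span_singleton_of_inner_eq_zero (hdim : 3 ≤ Module.rank ℂ H)
    {a b : H} (hab : ⟪a, b⟫_ℂ = 0) :
    Adjacent (ℂ ∙ a).starProjection (ℂ ∙ b).starProjection := by
  obtain ⟨z, hz, haz, hbz⟩ := exists_ne_zero_inner_eq_zero_inner_eq_zero hdim a b
  exact adjacent_starProjection_span_singleton isStarProjection_starProjection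
    (starProjection_span_singleton_apply_eq_zero_iff.2 hab) hz
    (starProjection_span_singleton_apply_eq_zero_iff.2 haz) hbz

/-- Nonmaximality says that the range of `P` has codimension at least two. -/
lemma nonmaxProj_iff {P : H →L[ℂ] H} (hP : IsStarProjection P) :
    NonmaxProj P ↔ ∃ u v : H, u ≠ 0 ∧ v ≠ 0 ∧ ⟪u, v⟫_ℂ = 0 ∧ P u = 0 ∧ P v = 0 := by
  constructor
  · rintro ⟨Q, hQ, hPQ, hQ1⟩
    rw [isProjOp_iff_isStarProjection] at hQ
    obtain ⟨hle, hne⟩ := lt_iff_le_and_ne.1 (ltOp_iff_lt.1 hPQ)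
    have hPQ : P * Q = P := (hP.le_iff_mul_eq_left hQ).1 hle
    have hQP : Q * P = P := (hP.le_iff_mul_eq_right hQ).1 hle
    obtain ⟨x, hx⟩ := DFunLike.ne_iff.1 (sub_ne_zero.2 (ltOp_iff_lt.1 hQ1).ne')
    obtain ⟨y, hy⟩ := DFunLike.ne_iff.1 (sub_ne_zero.2 hne.symm)
    have hker₁ : P * (1 - Q) = 0 := by rw [mul_sub, mul_one, hPQ, sub_self]
    have hker₂ : P * (Q - P) = 0 := by rw [mul_sub, hPQ, hP.isIdempotentElem.eq, sub_self]
    have horth : (1 - Q) * (Q - P) = 0 := by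
      rw [one_sub_mul, mul_sub, hQP, hQ.isIdempotentElem.eq, sub_self]
    refine ⟨(1 - Q) x, (Q - P) y, hx, hy,
      hQ.one_sub.isSelfAdjoint.inner_apply_apply_eq_zero horth x y, congr($hker₁ x),
      congr($hker₂ y)⟩
  · rintro ⟨u, v, hu, hv, huv, hPu, hPv⟩
    have hPL := adjacent_starProjection_span_singleton hP hPu hv hPv huv
    refine ⟨P + (ℂ ∙ u).starProjection, isProjOp_iff_isStarProjection.2
      (hP.add isStarProjection_starProjection hPL.1), ltOp_iff_lt.2 ?_, hPL.2⟩
    refine (le_add_of_nonneg_right isStarProjection_starProjection.nonneg).lt_of_ne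
      fun h => hu ?_
    simpa [starProjection_span_singleton_self] using congr($h u)

lemma nonmaxProj_starProjection_span_singleton (hdim : 3 ≤ Module.rank ℂ H) (e : H) :
    NonmaxProj (ℂ ∙ e).starProjection := by
  obtain ⟨u, hu, heu, -⟩ := exists_ne_zero_inner_eq_zero_inner_eq_zero hdim e e
  obtain ⟨v, hv, hev, huv⟩ := exists_ne_zero_inner_eq_zero_inner_eq_zero hdim e u
  exact (nonmaxProj_iff isStarProjection_starProjection).2 ⟨u, v, hu, hv, huv,
    starProjection_span_singleton_apply_eq_zero_iff.2 heu,
    starProjection_span_singleton_apply_eq_zero_iff.2 hev⟩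

lemma nontrivProj_starProjection_span_singleton (hdim : 3 ≤ Module.rank ℂ H) {e : H}
    (he : e ≠ 0) : NontrivProj (ℂ ∙ e).starProjection := by
  refine ⟨fun h => he ?_, (nonmaxProj_starProjection_span_singleton hdim e).ne_one⟩
  simpa [h] using (starProjection_span_singleton_self (𝕜 := ℂ) e).symm

/-- Any two nonmaximal nontrivial projections on a Hilbert space of dimension at least 3
are connected by a finite chain of nonmaximal nontrivial projections in which consecutive
projections `p_i, p_{i+1}` are orthogonal and satisfy `p_i + p_{i+1} < 1`. -/
theorem stmt17 (hdim : 3 ≤ Module.rank ℂ H) (p q : H →L[ℂ] H)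
    (hp : IsProjOp p) (hq : IsProjOp q)
    (hpn : NontrivProj p) (hqn : NontrivProj q)
    (hpm : NonmaxProj p) (hqm : NonmaxProj q) :
    ∃ (n : ℕ) (c : Fin (n + 1) → (H →L[ℂ] H)),
      c 0 = p ∧ c (Fin.last n) = q ∧
      (∀ i, IsProjOp (c i) ∧ NontrivProj (c i) ∧ NonmaxProj (c i)) ∧
      ∀ i : Fin n, c i.castSucc * c i.succ = 0 ∧ ltOp (c i.castSucc + c i.succ) 1 := by
  have hp' := isProjOp_iff_isStarProjection.1 hp
  have hq' := isProjOp_iff_isStarProjection.1 hq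
  obtain ⟨e, e', he, he', hee', hpe, hpe'⟩ := (nonmaxProj_iff hp').1 hpm
  obtain ⟨f, f', hf, hf', hff', hqf, hqf'⟩ := (nonmaxProj_iff hq').1 hqm
  obtain ⟨g, hg, heg, hfg⟩ := exists_ne_zero_inner_eq_zero_inner_eq_zero hdim e f
  have hline : ∀ {a : H}, a ≠ 0 → IsProjOp (ℂ ∙ a).starProjection ∧
      NontrivProj (ℂ ∙ a).starProjection ∧ NonmaxProj (ℂ ∙ a).starProjection := fun ha =>
    ⟨isProjOp_iff_isStarProjection.2 isStarProjection_starProjection,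
      nontrivProj_starProjection_span_singleton hdim ha,
      nonmaxProj_starProjection_span_singleton hdim _⟩
  refine ⟨4, ![p, (ℂ ∙ e).starProjection, (ℂ ∙ g).starProjection, (ℂ ∙ f).starProjection, q],
    rfl, rfl, fun i => ?_, fun i => ?_⟩ <;> fin_cases i
  exacts [⟨hp, hpn, hpm⟩, hline he, hline hg, hline hf, ⟨hq, hqn, hqm⟩,
    adjacent_starProjection_span_singleton hp' hpe he' hpe' hee',
    adjacent_starProjection_span_singleton_of_inner_eq_zero hdim heg,
    (adjacent_starProjection_span_singleton_of_inner_eq_zero hdim hfg).symm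
      isStarProjection_starProjection isStarProjection_starProjection,
    (adjacent_starProjection_span_singleton hq' hqf hf' hqf' hff').symm hq'
      isStarProjection_starProjection]
end
end
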